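/- arXiv:2109.00717 — 6 statements merged into one kernel-verified Lean document; each statement's English description precedes it below -/
import Mathlib

section
/- Let n ≥ 3, α = e^{2πi/2^n}, s_j = α^j + α^{-j}, and r_j = s_j + s_{2^{n-2}-j}. Then for all integers j and k, the product r_j · r_k lies in 2·ℤ[α + α^{-1}], i.e. r_j · r_k ≡ 0 (mod 2) in the ring of integers ℤ[α+α^{-1}] of the maximal real subfield. -/
/-!
Put `ζ = α ^ 2^(n-2) = i` and `a = α ^ j`. Then `s_(2^(n-2)-j) = ζ a⁻¹ + ζ⁻¹ a`, so
`r_j = (1 + i) a⁻¹ + (1 - i) a`; since `(1 ± i)² = ± 2i` and `(1 + i)(1 - i) = 2`, this gives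
`r_j r_k = 2 (s_(2^(n-2)-(j+k)) + s_(j-k))`. Each `s_m` is the value at `α + α⁻¹` of the
normalized Chebyshev polynomial `C_m ∈ ℤ[X]`, hence lies in `ℤ[α + α⁻¹]`.
-/

open Polynomial

theorem Polynomial.Chebyshev.C_eval_add_inv {K : Type*} [Field K] {x : K} (hx : x ≠ 0) (m : ℤ) :
    (Chebyshev.C K m).eval (x + x⁻¹) = x ^ m + x ^ (-m) := by
  induction m using Chebyshev.induct' with
  | zero => simp [Chebyshev.C_zero, one_add_one_eq_two]
  | one => simp [Chebyshev.C_one]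
  | add_two m ih₁ ih₀ =>
    rw [Chebyshev.C_add_two, eval_sub, eval_mul, eval_X, ih₁, ih₀]
    simp only [zpow_neg, zpow_add₀ hx, zpow_one, zpow_two]
    field_simp
    ring
  | neg m ih => rw [Chebyshev.C_neg, ih, neg_neg, add_comm]

theorem zpow_add_zpow_neg_mem_adjoin {K : Type*} [Field K] {x : K} (hx : x ≠ 0) (m : ℤ) :
    x ^ m + x ^ (-m) ∈ Algebra.adjoin ℤ {x + x⁻¹} := by
  rw [← Chebyshev.C_eval_add_inv hx, ← Chebyshev.aeval_C (R := ℤ)]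
  exact aeval_mem_adjoin_singleton ℤ _

theorem Complex.exp_two_pi_I_div_two_pow_pow {n : ℕ} (hn : 2 ≤ n) :
    Complex.exp (2 * Real.pi * Complex.I / 2 ^ n) ^ 2 ^ (n - 2) = Complex.I := by
  obtain ⟨m, rfl⟩ := Nat.exists_eq_add_of_le' hn
  have harg : ((2 ^ m : ℕ) : ℂ) * (2 * Real.pi * Complex.I / 2 ^ (m + 2)) =
      Real.pi / 2 * Complex.I := by
    push_cast
    field_simp
    ring
  rw [Nat.add_sub_cancel, ← Complex.exp_nat_mul, harg, Complex.exp_pi_div_two_mul_I]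

theorem mul_sum_zpow_add_zpow_neg {K : Type*} [Field K] {x : K} (hx : x ≠ 0) {N : ℤ}
    (hN : (x ^ N) ^ 2 = -1) (j k : ℤ) :
    (x ^ j + x ^ (-j) + (x ^ (N - j) + x ^ (-(N - j)))) *
        (x ^ k + x ^ (-k) + (x ^ (N - k) + x ^ (-(N - k)))) =
      2 * (x ^ (N - (j + k)) + x ^ (-(N - (j + k))) + (x ^ (j - k) + x ^ (-(j - k)))) := by
  simp only [zpow_neg, zpow_sub₀ hx, zpow_add₀ hx]
  have hζ : x ^ N ≠ 0 := zpow_ne_zero _ hx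
  have ha : x ^ j ≠ 0 := zpow_ne_zero _ hx
  have hb : x ^ k ≠ 0 := zpow_ne_zero _ hx
  field_simp
  linear_combination
    ((x ^ j) ^ 2 * (x ^ k) ^ 2 + ((x ^ j) ^ 2 + (x ^ k) ^ 2) * x ^ N + (x ^ N) ^ 2) * hN

theorem stmt_9 (n : ℕ) (hn : 3 ≤ n)
    (α : ℂ) (hα : α = Complex.exp (2 * Real.pi * Complex.I / 2 ^ n))
    (s : ℤ → ℂ) (hs : ∀ j : ℤ, s j = α ^ j + α ^ (-j))
    (r : ℤ → ℂ) (hr : ∀ j : ℤ, r j = s j + s (2 ^ (n - 2) - j)) :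
    ∀ j k : ℤ, ∃ x ∈ Algebra.adjoin ℤ ({α + α⁻¹} : Set ℂ),
      r j * r k = 2 * x := by
  intro j k
  have hα0 : α ≠ 0 := hα ▸ Complex.exp_ne_zero _
  have hαN : (α ^ ((2 : ℤ) ^ (n - 2))) ^ 2 = -1 := by
    rw [show (2 : ℤ) ^ (n - 2) = ((2 ^ (n - 2) : ℕ) : ℤ) by push_cast; rfl, zpow_natCast, hα,
      Complex.exp_two_pi_I_div_two_pow_pow (by omega), Complex.I_sq]
  refine ⟨s (2 ^ (n - 2) - (j + k)) + s (j - k),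
    add_mem (hs _ ▸ zpow_add_zpow_neg_mem_adjoin hα0 _)
      (hs _ ▸ zpow_add_zpow_neg_mem_adjoin hα0 _), ?_⟩
  simp only [hr, hs]
  exact mul_sum_zpow_add_zpow_neg hα0 hαN j k
end

section
/- Let n ≥ 3, α = e^{2πi/2^n}, and s_j = α^j + α^{-j}. The family (1, s_1, s_2, …, s_{2^{n-2}-1}) is an integral basis of the maximal real subfield ℚ(α) ∩ ℝ, i.e. a ℤ-basis of its ring of integers ℤ[α + α^{-1}]. -/
/-!
`θ = α + α⁻¹` is a root of the Dickson polynomial `D_{2^(n-2)}`, since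
`D_m(α + α⁻¹) = α^m + α^(-m)` and `α^(2^(n-2))` squares to `-1`; and `α` has degree at most two
over `ℚ(θ)` (it is a root of `X² - θX + 1`) while `[ℚ(α) : ℚ] = 2^(n-1)`. So `θ` has degree
exactly `2^(n-2)` and `1, θ, …, θ^(2^(n-2)-1)` is a `ℤ`-basis of `ℤ[θ]`. Replacing `θ^i` by
`s_i = D_i(θ)`, monic of degree `i`, is a unitriangular change of basis over `ℤ`.
-/

open Polynomial

namespace Polynomial

variable {R : Type*} [CommRing R] [Nontrivial R]

theorem monic_X_mul_sub_and_natDegree_of_natDegree_le {p q : R[X]} {m : ℕ} (hp : p.Monic)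
    (hpdeg : p.natDegree = m + 1) (hq : q.natDegree ≤ m) :
    (X * p - q).Monic ∧ (X * p - q).natDegree = m + 2 := by
  have hXp : (X * p).natDegree = m + 2 := by
    rw [monic_X.natDegree_mul hp, natDegree_X, hpdeg]; ring
  have hlt : q.natDegree < (X * p).natDegree := by omega
  exact ⟨(monic_X.mul hp).sub_of_left (degree_lt_degree hlt),
    by rw [natDegree_sub_eq_left_of_natDegree_lt hlt, hXp]⟩

theorem monic_dickson_one_one_and_natDegree :
    ∀ n : ℕ, n ≠ 0 → (dickson 1 (1 : R) n).Monic ∧ (dickson 1 (1 : R) n).natDegree = n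
  | 1, _ => by simp [dickson_one, monic_X]
  | 2, _ => by
    rw [dickson_add_two, C_1, one_mul]
    exact monic_X_mul_sub_and_natDegree_of_natDegree_le (by simp [dickson_one])
      (by simp [dickson_one]) (by rw [dickson_zero]; norm_num)
  | n + 3, _ => by
    rw [dickson_add_two, C_1, one_mul]
    obtain ⟨hmonic, hdeg⟩ := monic_dickson_one_one_and_natDegree (n + 2) (by omega)
    obtain ⟨-, hdeg'⟩ := monic_dickson_one_one_and_natDegree (n + 1) (by omega)
    exact monic_X_mul_sub_and_natDegree_of_natDegree_le hmonic hdeg hdeg'.le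

end Polynomial

theorem Polynomial.aeval_dickson_one_one_add_of_mul_eq_one {R A : Type*} [CommRing R]
    [CommRing A] [Algebra R A] {x y : A} (hxy : x * y = 1) (n : ℕ) :
    aeval (x + y) (dickson 1 (1 : R) n) = x ^ n + y ^ n := by
  rw [aeval_def, eval₂_eq_eval_map, map_dickson, map_one, dickson_one_one_eval_add_inv x y hxy]

theorem PowerBasis.exists_basis_aeval_of_monic {R S : Type*} [CommRing R] [Ring S] [Algebra R S]
    (pb : PowerBasis R S) (p : Fin pb.dim → R[X]) (hmonic : ∀ i, (p i).Monic)
    (hdeg : ∀ i, (p i).natDegree = i) :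
    ∃ b : Module.Basis (Fin pb.dim) R S, ∀ i, b i = aeval pb.gen (p i) := by
  set f := Matrix.toLin pb.basis pb.basis (.of fun i j ↦ (p j).coeff i)
  have hf : IsUnit (LinearMap.toMatrix pb.basis pb.basis f).det := by
    rw [LinearMap.toMatrix_toLin, Matrix.det_matrixOfPolynomials p hdeg hmonic]
    exact isUnit_one
  refine ⟨pb.basis.map (LinearEquiv.ofIsUnitDet hf), fun i ↦ ?_⟩
  rw [Module.Basis.map_apply, LinearEquiv.ofIsUnitDet_apply, Matrix.toLin_self,
    aeval_eq_sum_range' (hdeg i ▸ i.isLt), ← Fin.sum_univ_eq_sum_range]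
  simp [pb.basis_eq_pow]

open IntermediateField in
theorem natDegree_minpoly_le_two_mul_natDegree_minpoly_add_inv {K L : Type*} [Field K] [Field L]
    [Algebra K L] {x : L} (hx : x ≠ 0) (hint : IsIntegral K (x + x⁻¹)) :
    (minpoly K x).natDegree ≤ 2 * (minpoly K (x + x⁻¹)).natDegree := by
  set F := K⟮x + x⁻¹⟯
  set θ : F := AdjoinSimple.gen K (x + x⁻¹)
  have hroot : aeval x (X ^ 2 - C θ * X + 1 : F[X]) = 0 := by
    simp only [map_add, map_sub, map_mul, map_pow, aeval_X, aeval_C, map_one]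
    show x ^ 2 - (x + x⁻¹) * x + 1 = 0
    field_simp
    ring
  have hmonic : (X ^ 2 - C θ * X + 1 : F[X]).Monic := by monicity!
  have hdeg : (X ^ 2 - C θ * X + 1 : F[X]).natDegree = 2 := by compute_degree!
  have hxF : IsIntegral F x := ⟨_, hmonic, hroot⟩
  have : FiniteDimensional K F := adjoin.finiteDimensional hint
  have : FiniteDimensional F F⟮x⟯ := adjoin.finiteDimensional hxF
  have : FiniteDimensional K F⟮x⟯ := Module.Finite.trans F F⟮x⟯
  have : Module.Free F F⟮x⟯ := Module.Free.of_divisionRing F F⟮x⟯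
  have : IsScalarTower K F⟮x⟯ L := IsScalarTower.of_algebraMap_eq fun _ ↦ rfl
  calc (minpoly K x).natDegree
      = (minpoly K (AdjoinSimple.gen F x)).natDegree := by
        rw [← minpoly.algebraMap_eq (algebraMap F⟮x⟯ L).injective]; rfl
    _ ≤ Module.finrank K F⟮x⟯ := minpoly.natDegree_le _
    _ = Module.finrank K F * Module.finrank F F⟮x⟯ := (Module.finrank_mul_finrank K F F⟮x⟯).symm
    _ ≤ (minpoly K (x + x⁻¹)).natDegree * 2 := by
      rw [adjoin.finrank hint, adjoin.finrank hxF]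
      gcongr
      exact hdeg ▸ natDegree_le_natDegree (minpoly.min F x hmonic hroot)
    _ = _ := mul_comm _ _

namespace IsPrimitiveRoot

theorem isIntegral_add_inv {K : Type*} [Field K] {ζ : K} {m : ℕ} (hζ : IsPrimitiveRoot ζ m)
    (hm : 0 < m) : IsIntegral ℤ (ζ + ζ⁻¹) :=
  (hζ.isIntegral hm).add (hζ.inv.isIntegral hm)

theorem natDegree_minpoly_int_add_inv_of_two_pow {L : Type*} [Field L] [CharZero L] {ζ : L}
    {k : ℕ} (hζ : IsPrimitiveRoot ζ (2 ^ (k + 2))) :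
    (minpoly ℤ (ζ + ζ⁻¹)).natDegree = 2 ^ k := by
  have hζ0 : ζ ≠ 0 := hζ.ne_zero (by positivity)
  have hint := hζ.isIntegral_add_inv (by positivity)
  apply le_antisymm
  · have hsq : (ζ ^ 2 ^ k) ^ 2 = -1 := by
      rw [← pow_mul, ← pow_succ]
      refine eq_neg_one_of_two_right ?_
      simpa [pow_succ, Nat.mul_div_cancel_left] using
        hζ.pow_of_dvd (p := 2 ^ (k + 1)) (by positivity) (pow_dvd_pow 2 (by omega))
    have hroot : aeval (ζ + ζ⁻¹) (dickson 1 (1 : ℤ) (2 ^ k)) = 0 := by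
      have : ζ ^ 2 ^ k ≠ 0 := pow_ne_zero _ hζ0
      rw [aeval_dickson_one_one_add_of_mul_eq_one (mul_inv_cancel₀ hζ0), inv_pow]
      field_simp
      linear_combination hsq
    obtain ⟨hmonic, hdeg⟩ := monic_dickson_one_one_and_natDegree (R := ℤ) (2 ^ k) (by positivity)
    exact hdeg ▸ natDegree_le_natDegree (minpoly.min ℤ _ hmonic hroot)
  · have h := natDegree_minpoly_le_two_mul_natDegree_minpoly_add_inv (K := ℚ) hζ0 hint.tower_top
    rw [minpoly.isIntegrallyClosed_eq_field_fractions' ℚ hint, (minpoly.monic hint).natDegree_map,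
      ← cyclotomic_eq_minpoly_rat hζ (by positivity), natDegree_cyclotomic,
      Nat.totient_prime_pow_succ Nat.prime_two] at h
    omega

end IsPrimitiveRoot

theorem stmt_11 (n : ℕ) (hn : 3 ≤ n)
    (α : ℂ) (hα : α = Complex.exp (2 * Real.pi * Complex.I / 2 ^ n))
    (s : ℤ → ℂ) (hs : ∀ j : ℤ, s j = α ^ j + α ^ (-j)) :
    ∃ b : Module.Basis (Fin (2 ^ (n - 2))) ℤ (Algebra.adjoin ℤ ({α + α⁻¹} : Set ℂ)),
      ∀ i : Fin (2 ^ (n - 2)),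
        (b i : ℂ) = if (i : ℕ) = 0 then 1 else s ((i : ℕ) : ℤ) := by
  obtain ⟨k, rfl⟩ : ∃ k, n = k + 2 := ⟨n - 2, by omega⟩
  have hprim : IsPrimitiveRoot α (2 ^ (k + 2)) := by
    subst hα; exact_mod_cast Complex.isPrimitiveRoot_exp _ (by positivity)
  set pb := Algebra.adjoin.powerBasis' (hprim.isIntegral_add_inv (by positivity))
  have hdim : pb.dim = 2 ^ k := hprim.natDegree_minpoly_int_add_inv_of_two_pow
  set p : Fin pb.dim → ℤ[X] := fun i ↦ if (i : ℕ) = 0 then 1 else dickson 1 1 i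
  have hp : ∀ i, (p i).Monic ∧ (p i).natDegree = i := fun i ↦ by
    by_cases hi : (i : ℕ) = 0
    · simp [p, hi]
    · simpa [p, hi] using monic_dickson_one_one_and_natDegree (R := ℤ) i hi
  obtain ⟨b, hb⟩ := pb.exists_basis_aeval_of_monic p (hp · |>.1) (hp · |>.2)
  rw [Nat.add_sub_cancel]
  refine ⟨b.reindex (finCongr hdim), fun i ↦ ?_⟩
  rw [Module.Basis.reindex_apply, hb, aeval_subalgebra_coe, Algebra.adjoin.powerBasis'_gen]
  by_cases hi : (i : ℕ) = 0
  · simp [p, hi]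
  · have hα0 : α ≠ 0 := hprim.ne_zero (by positivity)
    simp [p, hi, hs, aeval_dickson_one_one_add_of_mul_eq_one (mul_inv_cancel₀ hα0)]
end

section
/- Let n ≥ 3, α = e^{2πi/2^n}, s_j = α^j + α^{-j}, and r_j = s_j + s_{2^{n-2}-j}. Then the family B = (1, s_1, …, s_{2^{n-3}-1}, s_{2^{n-3}}, r_1, …, r_{2^{n-3}-1}) is a ℤ-basis of the ring of integers ℤ[α + α^{-1}] of the maximal real subfield ℚ(α) ∩ ℝ. -/
/-!
Write `c = α + α⁻¹`. The identity `s_i s_j = s_{i+j} + s_{i-j}` makes the `ℤ`-span of `1` and all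
`s_j` a ring; it contains `s_1 = c`, and every `s_j` is a Dickson polynomial in `c`, so this span
is `ℤ[c]`. As `α ^ 2^(n-1) = -1`, every `s_j` is `± s_t` with `0 ≤ t ≤ 2^(n-2)`, where
`s_{2^(n-2)} = 0` and, for `2^(n-3) < t < 2^(n-2)`, `s_t = r_{2^(n-2)-t} - s_{2^(n-2)-t}`; hence
`B` spans `ℤ[c]`. Its `2^(n-2)` members are independent because their `ℚ`-span contains
`1, c, …, c^(2^(n-2)-1)`, and `c` has degree at least `[ℚ(α) : ℚ] / 2 = 2^(n-2)`, since `α` is a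
root of `X² - c X + 1`.
-/

open Polynomial IntermediateField Module Submodule
open scoped Pointwise

section SymZpow

variable {K : Type*} [Field K] {x : K}

def symZpow (x : K) (j : ℤ) : K := x ^ j + x ^ (-j)

theorem symZpow_neg (x : K) (j : ℤ) : symZpow x (-j) = symZpow x j := by
  rw [symZpow, symZpow, neg_neg, add_comm]

theorem symZpow_zero (x : K) : symZpow x 0 = 2 := by
  norm_num [symZpow, one_add_one_eq_two]

theorem symZpow_mul_symZpow (hx : x ≠ 0) (i j : ℤ) :
    symZpow x i * symZpow x j = symZpow x (i + j) + symZpow x (i - j) := by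
  simp only [symZpow, neg_add, neg_sub, zpow_add₀ hx, zpow_sub₀ hx, zpow_neg]
  field_simp
  ring

theorem symZpow_add_of_zpow_eq_neg_one {k : ℤ} (hx : x ≠ 0) (hk : x ^ k = -1) (j : ℤ) :
    symZpow x (j + k) = -symZpow x j := by
  simp only [symZpow, neg_add, zpow_add₀ hx, zpow_neg, hk]
  ring

theorem symZpow_eq_zero_of_zpow_two_mul_eq_neg_one {e : ℤ} (hx : x ≠ 0) (he : x ^ (2 * e) = -1) :
    symZpow x e = 0 := by
  have : x ^ e * x ^ e = -1 := by rw [← zpow_add₀ hx, ← two_mul, he]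
  rw [symZpow, zpow_neg]
  field_simp
  linear_combination this

theorem symZpow_mem_adjoin (hx : x ≠ 0) (j : ℤ) :
    symZpow x j ∈ Algebra.adjoin ℤ {x + x⁻¹} := by
  wlog hj : 0 ≤ j generalizing j
  · simpa [symZpow_neg] using this (-j) (by omega)
  lift j to ℕ using hj
  rw [Algebra.adjoin_singleton_eq_range_aeval]
  refine ⟨dickson 1 1 j, ?_⟩
  change aeval (x + x⁻¹) (dickson 1 (1 : ℤ) j) = _
  rw [aeval_def, eval₂_eq_eval_map, map_dickson, map_one,
    dickson_one_one_eval_add_inv x x⁻¹ (mul_inv_cancel₀ hx), symZpow, zpow_neg, zpow_natCast,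
    inv_pow]

theorem adjoin_add_inv_eq_span (hx : x ≠ 0) :
    Subalgebra.toSubmodule (Algebra.adjoin ℤ {x + x⁻¹}) =
      span ℤ (insert 1 (Set.range (symZpow x))) := by
  set G : Set K := insert 1 (Set.range (symZpow x))
  have hsG (j : ℤ) : symZpow x j ∈ span ℤ G := subset_span (Set.mem_insert_of_mem _ ⟨j, rfl⟩)
  have hGG : G * G ⊆ span ℤ G := by
    rintro _ ⟨a, ha, b, hb, rfl⟩
    obtain rfl | ⟨i, rfl⟩ := ha
    · simpa using subset_span hb
    obtain rfl | ⟨j, rfl⟩ := hb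
    · simpa using hsG i
    simpa only [SetLike.mem_coe, symZpow_mul_symZpow hx] using add_mem (hsG _) (hsG _)
  apply le_antisymm
  · let A : Subalgebra ℤ K := (span ℤ G).toSubalgebra (subset_span (Set.mem_insert _ _))
      fun _ _ ha hb => span_le.mpr hGG (span_mul_span ℤ G G ▸ mul_mem_mul ha hb)
    have hA : Algebra.adjoin ℤ {x + x⁻¹} ≤ A := by
      rw [Algebra.adjoin_le_iff, Set.singleton_subset_iff]
      exact (by simpa [symZpow] using hsG 1 : x + x⁻¹ ∈ span ℤ G)
    exact hA
  · rw [span_le]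
    rintro _ (rfl | ⟨j, rfl⟩)
    · exact (Algebra.adjoin ℤ {x + x⁻¹}).one_mem
    · exact symZpow_mem_adjoin hx j

theorem exists_symZpow_eq_or_eq_neg {e : ℤ} (hx : x ≠ 0) (he0 : 0 < e) (he : x ^ (2 * e) = -1)
    (j : ℤ) :
    ∃ t : ℤ, 0 ≤ t ∧ t ≤ e ∧ (symZpow x j = symZpow x t ∨ symZpow x j = -symZpow x t) := by
  have hperiod (q : ℤ) (i : ℤ) :
      symZpow x (i + 2 * e * q) = symZpow x i ∨ symZpow x (i + 2 * e * q) = -symZpow x i := by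
    induction q using Int.induction_on with
    | zero => simp
    | succ q ih =>
      rw [mul_add, mul_one, ← add_assoc, symZpow_add_of_zpow_eq_neg_one hx he]
      rcases ih with h | h <;> simp [h]
    | pred q ih =>
      have h := symZpow_add_of_zpow_eq_neg_one hx he (i + 2 * e * (-q - 1))
      rw [show i + 2 * e * (-q - 1) + 2 * e = i + 2 * e * -q by ring] at h
      rw [neg_eq_iff_eq_neg.mp h.symm]
      rcases ih with h' | h' <;> rw [h'] <;> simp
  set t := j % (2 * e)
  have ht0 : 0 ≤ t := Int.emod_nonneg _ (by omega)
  have ht : t < 2 * e := Int.emod_lt_of_pos _ (by omega)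
  have hj : symZpow x j = symZpow x t ∨ symZpow x j = -symZpow x t := by
    rw [← Int.emod_add_mul_ediv j (2 * e)]
    exact hperiod _ _
  rcases le_or_gt t e with hte | hte
  · exact ⟨t, ht0, hte, hj⟩
  · have hrefl : symZpow x t = -symZpow x (2 * e - t) := by
      rw [← symZpow_neg x (2 * e - t), ← symZpow_add_of_zpow_eq_neg_one hx he]
      ring_nf
    refine ⟨2 * e - t, by omega, by omega, ?_⟩
    rcases hj with h | h <;> simp [h, hrefl]

end SymZpow

section Family

variable {K : Type*} [Field K] {x : K} {d h : ℕ}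

/-- With `d = 2 ^ (n - 2)` and `h = 2 ^ (n - 3)` this is the family `B`: entry `h + t` is `r_t`. -/
def realCyclotomicFamily (x : K) (d h : ℕ) (i : Fin d) : K :=
  if (i : ℕ) = 0 then 1
  else if (i : ℕ) ≤ h then symZpow x i
  else symZpow x (i - h) + symZpow x (d - (i - h))

theorem span_range_realCyclotomicFamily (hx : x ≠ 0) (hh : 0 < h) (hd : d = 2 * h)
    (hxd : x ^ (2 * d) = -1) :
    span ℤ (Set.range (realCyclotomicFamily x d h)) =
      span ℤ (insert 1 (Set.range (symZpow x))) := by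
  set M := span ℤ (Set.range (realCyclotomicFamily x d h))
  have hmem (i : Fin d) : realCyclotomicFamily x d h i ∈ M := subset_span ⟨i, rfl⟩
  have hsmall (t : ℕ) (ht : t ≤ h) : symZpow x t ∈ M := by
    rcases Nat.eq_zero_or_pos t with rfl | ht0
    · simpa [symZpow_zero, realCyclotomicFamily, one_add_one_eq_two] using
        add_mem (hmem ⟨0, by omega⟩) (hmem ⟨0, by omega⟩)
    · simpa [realCyclotomicFamily, ht0.ne', ht] using hmem ⟨t, by omega⟩
  have hhalf (t : ℕ) (ht : t ≤ d) : symZpow x t ∈ M := by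
    rcases le_or_gt t h with hth | hth
    · exact hsmall t hth
    rcases ht.eq_or_lt with rfl | htd
    · rw [symZpow_eq_zero_of_zpow_two_mul_eq_neg_one hx (by exact_mod_cast hxd)]
      exact zero_mem M
    have hpair : realCyclotomicFamily x d h ⟨h + (d - t), by omega⟩ =
        symZpow x (d - t : ℕ) + symZpow x t := by
      rw [realCyclotomicFamily, if_neg (by dsimp only; omega), if_neg (by dsimp only; omega)]
      push_cast [htd.le]
      ring_nf
    have := sub_mem (hmem ⟨h + (d - t), by omega⟩) (hsmall (d - t) (by omega))
    rwa [hpair, add_sub_cancel_left] at this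
  apply le_antisymm
  · rw [span_le]
    rintro _ ⟨i, rfl⟩
    unfold realCyclotomicFamily
    split_ifs
    · exact subset_span (Set.mem_insert _ _)
    · exact subset_span (Set.mem_insert_of_mem _ ⟨_, rfl⟩)
    · exact add_mem (subset_span (Set.mem_insert_of_mem _ ⟨_, rfl⟩))
        (subset_span (Set.mem_insert_of_mem _ ⟨_, rfl⟩))
  · rw [span_le]
    rintro _ (rfl | ⟨j, rfl⟩)
    · simpa [realCyclotomicFamily] using hmem ⟨0, by omega⟩
    obtain ⟨t, ht0, htd, hj | hj⟩ :=
      exists_symZpow_eq_or_eq_neg hx (e := d) (by omega) (by exact_mod_cast hxd) j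
    all_goals
      lift t to ℕ using ht0
      rw [SetLike.mem_coe, hj]
    · exact hhalf t (by omega)
    · exact neg_mem (hhalf t (by omega))

end Family

theorem finrank_adjoin_le_two_mul_finrank_adjoin_add_inv {F E : Type*} [Field F] [Field E]
    [Algebra F E] {x : E} (hx0 : x ≠ 0) (hx : IsIntegral F x) :
    finrank F F⟮x⟯ ≤ 2 * finrank F F⟮x + x⁻¹⟯ := by
  set K := F⟮x + x⁻¹⟯
  have hxK : IsIntegral K x := hx.tower_top
  have hc : ((AdjoinSimple.gen F (x + x⁻¹) : K) : E) = x + x⁻¹ := rfl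
  have hquad : finrank K K⟮x⟯ ≤ 2 := by
    rw [adjoin.finrank hxK]
    refine (natDegree_le_natDegree (minpoly.degree_le_of_ne_zero K x
      (p := X ^ 2 - C (AdjoinSimple.gen F (x + x⁻¹)) * X + 1) ?_ ?_)).trans ?_
    · intro h
      simpa using congr_arg (coeff · 0) h
    · simp only [map_add, map_sub, map_mul, map_pow, aeval_X, aeval_C, map_one,
        IntermediateField.algebraMap_apply, hc]
      field_simp
      ring
    · compute_degree
  have : FiniteDimensional F K := adjoin.finiteDimensional (hx.add hx.inv)
  have : FiniteDimensional K K⟮x⟯ := adjoin.finiteDimensional hxK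
  have hle : F⟮x⟯ ≤ K⟮x⟯.restrictScalars F :=
    adjoin_simple_le_iff.mpr (mem_adjoin_simple_self K x)
  have : Module.Free K K⟮x⟯ := Module.Free.of_divisionRing K K⟮x⟯
  have : FiniteDimensional F (K⟮x⟯.restrictScalars F) := FiniteDimensional.trans F K K⟮x⟯
  calc finrank F F⟮x⟯ ≤ finrank F (K⟮x⟯.restrictScalars F) := finrank_le_of_le_right hle
    _ = finrank F K * finrank K K⟮x⟯ := (Module.finrank_mul_finrank F K K⟮x⟯).symm
    _ ≤ 2 * finrank F K := by rw [mul_comm]; gcongr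

theorem linearIndependent_of_card_le_of_range_subset_span {R V ι κ : Type*} [DivisionRing R]
    [AddCommGroup V] [Module R V] [Fintype ι] [Fintype κ] {v : ι → V} {w : κ → V}
    (hw : LinearIndependent R w) (hwv : Set.range w ⊆ span R (Set.range v))
    (hcard : Fintype.card ι ≤ Fintype.card κ) : LinearIndependent R v := by
  have := FiniteDimensional.span_of_finite R (Set.finite_range v)
  rw [linearIndependent_iff_card_le_finrank_span]
  calc Fintype.card ι ≤ Fintype.card κ := hcard
    _ = finrank R (span R (Set.range w)) := (finrank_span_eq_card hw).symm
    _ ≤ (Set.range v).finrank R := Submodule.finrank_mono (span_le.mpr hwv)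

theorem linearIndependent_of_adjoin_add_inv_le_span {K : Type*} [Field K] [CharZero K] {x : K}
    {N d : ℕ} (hx : IsPrimitiveRoot x N) (hN : 0 < N) (hd : 2 * d ≤ N.totient) {v : Fin d → K}
    (hv : Subalgebra.toSubmodule (Algebra.adjoin ℤ {x + x⁻¹}) ≤ span ℤ (Set.range v)) :
    LinearIndependent ℤ v := by
  have hint : IsIntegral ℚ x := (hx.isIntegral hN).tower_top
  have hdeg : d ≤ (minpoly ℚ (x + x⁻¹)).natDegree := by
    have h := finrank_adjoin_le_two_mul_finrank_adjoin_add_inv (hx.ne_zero hN.ne') hint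
    rw [adjoin.finrank hint, ← cyclotomic_eq_minpoly_rat hx hN, natDegree_cyclotomic,
      adjoin.finrank (hint.add hint.inv)] at h
    omega
  have hpow := (linearIndependent_pow (x + x⁻¹)).comp (Fin.castLE hdeg) (Fin.castLE_injective _)
  refine (linearIndependent_of_card_le_of_range_subset_span hpow ?_ (by simp)).restrict_scalars' ℤ
  rintro _ ⟨k, rfl⟩
  exact span_le_restrictScalars ℤ ℚ _ (hv (pow_mem (Algebra.self_mem_adjoin_singleton ℤ _) _))

theorem exists_basis_adjoin_add_inv_of_isPrimitiveRoot_two_pow {K : Type*} [Field K] [CharZero K]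
    {x : K} {n : ℕ} (hx : IsPrimitiveRoot x (2 ^ n)) (hn : 3 ≤ n) :
    ∃ b : Module.Basis (Fin (2 ^ (n - 2))) ℤ (Algebra.adjoin ℤ ({x + x⁻¹} : Set K)),
      ∀ i, (b i : K) = realCyclotomicFamily x (2 ^ (n - 2)) (2 ^ (n - 3)) i := by
  have hx0 : x ≠ 0 := hx.ne_zero (by positivity)
  have hd : 2 ^ (n - 2) = 2 * 2 ^ (n - 3) := by rw [← pow_succ']; congr 1; omega
  have hneg : x ^ (2 * 2 ^ (n - 2)) = -1 := by
    refine (hx.pow (by positivity) ?_).eq_neg_one_of_two_right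
    rw [← pow_succ', ← pow_succ]; congr 1; omega
  have hspan := (span_range_realCyclotomicFamily hx0 (by positivity) hd hneg).trans
    (adjoin_add_inv_eq_span hx0).symm
  have hli := linearIndependent_of_adjoin_add_inv_le_span hx (by positivity) ?_ hspan.ge
  · exact ⟨(Module.Basis.span hli).map (LinearEquiv.ofEq _ _ hspan),
      fun i => congr_arg Subtype.val (Module.Basis.span_apply hli i)⟩
  have h2 : 2 * 2 ^ (n - 2) = 2 ^ (n - 1) := by rw [← pow_succ']; congr 1; omega
  simp [Nat.totient_prime_pow Nat.prime_two (by omega : 0 < n), h2]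

theorem stmt_12 (n : ℕ) (hn : 3 ≤ n)
    (α : ℂ) (hα : α = Complex.exp (2 * Real.pi * Complex.I / 2 ^ n))
    (s : ℤ → ℂ) (hs : ∀ j : ℤ, s j = α ^ j + α ^ (-j))
    (r : ℤ → ℂ) (hr : ∀ j : ℤ, r j = s j + s (2 ^ (n - 2) - j)) :
    ∃ b : Module.Basis (Fin (2 ^ (n - 2))) ℤ (Algebra.adjoin ℤ ({α + α⁻¹} : Set ℂ)),
      ∀ i : Fin (2 ^ (n - 2)),
        (b i : ℂ) =
          if (i : ℕ) = 0 then 1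
          else if (i : ℕ) ≤ 2 ^ (n - 3) then s ((i : ℕ) : ℤ)
          else r (((i : ℕ) : ℤ) - 2 ^ (n - 3)) := by
  have hprim : IsPrimitiveRoot α (2 ^ n) := by
    simpa [hα] using Complex.isPrimitiveRoot_exp (2 ^ n) (by positivity)
  obtain ⟨b, hb⟩ := exists_basis_adjoin_add_inv_of_isPrimitiveRoot_two_pow hprim hn
  refine ⟨b, fun i => ?_⟩
  simp [hb, realCyclotomicFamily, hr, hs, symZpow]
end

section
/- Let n ≥ 3, α = e^{2πi/2^n}, s_j = α^j + α^{-j}, and r_j = s_j + s_{2^{n-2}-j}. Let R_ℤ be the additive subgroup of ℤ[α+α^{-1}] generated by r_1, …, r_{2^{n-3}-1}. Then R̃ = R_ℤ + 2ℤ[α+α^{-1}] is an ideal of the ring ℤ[α+α^{-1}], and R_ℤ · R_ℤ ⊆ 2ℤ[α+α^{-1}]. -/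
/-!
Put `m = 2 ^ (n - 2)` and `ε = α ^ m`, so that `ε ^ 2 = -1`. Then
`r_j = (1 - ε) α ^ j + (1 + ε) α ^ (-j)`, and multiplying out gives
`r_j r_k = 2 (s_{j-k} + s_{j+k-m})`. Every `s_j` is a Dickson polynomial evaluated at `α + α⁻¹`,
so `R_ℤ R_ℤ ⊆ 2 ℤ[α + α⁻¹]`. Since `ℤ[α + α⁻¹]` is generated by `α + α⁻¹`, `R̃` is an ideal as soon
as it is stable under multiplication by `α + α⁻¹`; this follows from
`(α + α⁻¹) r_j = r_{j+1} + r_{j-1}`, the two boundary terms `r_0 = 2` and `r_{m/2} = 2 s_{m/2}`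
lying in `2 ℤ[α + α⁻¹]`.
-/

open Polynomial Pointwise

namespace AddSubgroup

theorem mul_mem_of_mem_adjoin_singleton {R : Type*} [Ring R] {β : R} {I : AddSubgroup R}
    (hI : ∀ x ∈ I, β * x ∈ I) {a x : R} (ha : a ∈ Algebra.adjoin ℤ {β}) (hx : x ∈ I) :
    a * x ∈ I := by
  induction ha using Algebra.adjoin_induction generalizing x with
  | mem b hb => exact (Set.mem_singleton_iff.1 hb) ▸ hI x hx
  | algebraMap k => simpa [← zsmul_eq_mul] using zsmul_mem hx k
  | add a b _ _ iha ihb => exact add_mul a b x ▸ add_mem (iha hx) (ihb hx)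
  | mul a b _ _ iha ihb => exact (mul_assoc a b x).symm ▸ iha (ihb hx)

theorem mul_mem_of_mem_closure {R : Type*} [NonUnitalNonAssocRing R] {S : Set R}
    {H : AddSubgroup R} (hS : ∀ x ∈ S, ∀ y ∈ S, x * y ∈ H) {x y : R} (hx : x ∈ closure S)
    (hy : y ∈ closure S) : x * y ∈ H := by
  have hleft : ∀ x ∈ S, closure S ≤ H.comap (AddMonoidHom.mulLeft x) :=
    fun x hx => (closure_le _).2 fun y hy => hS x hx y hy
  exact ((closure_le (H.comap (AddMonoidHom.mulRight y))).2 fun x' hx' => hleft x' hx' hy) hx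

end AddSubgroup

section

variable {K : Type*} [Field K]

def symPow (α : K) (j : ℤ) : K := α ^ j + α ^ (-j)

/-- The paper's `r_j`, with `m = 2 ^ (n - 2)`. -/
def foldSymPow (α : K) (m j : ℤ) : K := symPow α j + symPow α (m - j)

variable {α : K}

theorem symPow_neg (α : K) (j : ℤ) : symPow α (-j) = symPow α j := by
  rw [symPow, symPow, neg_neg, add_comm]

theorem symPow_natCast (α : K) (k : ℕ) : symPow α k = α ^ k + α⁻¹ ^ k := by
  rw [symPow, zpow_neg, zpow_natCast, inv_pow]

theorem symPow_mem_adjoin (hα : α ≠ 0) (j : ℤ) : symPow α j ∈ Algebra.adjoin ℤ {α + α⁻¹} := by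
  suffices h : ∀ k : ℕ, symPow α k ∈ Algebra.adjoin ℤ {α + α⁻¹} by
    obtain ⟨k, rfl | rfl⟩ := j.eq_nat_or_neg
    exacts [h k, symPow_neg α k ▸ h k]
  intro k
  rw [symPow_natCast, ← dickson_one_one_eval_add_inv α α⁻¹ (mul_inv_cancel₀ hα),
    ← (algebraMap ℤ K).map_one, ← map_dickson, eval_map_algebraMap]
  exact aeval_mem_adjoin_singleton ℤ _

theorem symPow_eq_zero {m : ℤ} (hα : α ≠ 0) (hm : α ^ (2 * m) = -1) : symPow α m = 0 := by
  rw [symPow, zpow_neg]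
  rw [two_mul, zpow_add₀ hα] at hm
  field_simp
  linear_combination hm

theorem foldSymPow_zero {m : ℤ} (hα : α ≠ 0) (hm : α ^ (2 * m) = -1) : foldSymPow α m 0 = 2 := by
  rw [foldSymPow, sub_zero, symPow_eq_zero hα hm, symPow, neg_zero, zpow_zero]
  norm_num

theorem foldSymPow_two_mul_self (h : ℤ) : foldSymPow α (2 * h) h = 2 * symPow α h := by
  rw [foldSymPow, two_mul, add_sub_cancel_right, two_mul]

theorem add_inv_mul_foldSymPow (hα : α ≠ 0) (m j : ℤ) :
    (α + α⁻¹) * foldSymPow α m j = foldSymPow α m (j + 1) + foldSymPow α m (j - 1) := by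
  simp only [foldSymPow, symPow, zpow_add₀ hα, zpow_sub₀ hα, zpow_neg, zpow_one]
  field_simp
  ring

theorem foldSymPow_mul_foldSymPow {m : ℤ} (hα : α ≠ 0) (hm : α ^ (2 * m) = -1) (j k : ℤ) :
    foldSymPow α m j * foldSymPow α m k = 2 * (symPow α (j - k) + symPow α (j + k - m)) := by
  rw [two_mul, zpow_add₀ hα] at hm
  simp only [foldSymPow, symPow, zpow_add₀ hα, zpow_sub₀ hα, zpow_neg, neg_sub]
  field_simp
  linear_combination ((α ^ j) ^ 2 * α ^ m + (α ^ j) ^ 2 * (α ^ k) ^ 2 + α ^ m * (α ^ k) ^ 2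
    + (α ^ m) ^ 2) * hm

/-- The paper's `R_ℤ`, with `h = 2 ^ (n - 3)`. -/
def foldSymPowSpan (α : K) (h : ℕ) : AddSubgroup K :=
  AddSubgroup.closure {x | ∃ j : ℕ, 1 ≤ j ∧ j ≤ h - 1 ∧ x = foldSymPow α (2 * h) j}

/-- The paper's `R̃`. -/
def foldSymPowIdeal (α : K) (h : ℕ) : AddSubgroup K :=
  foldSymPowSpan α h ⊔
    (Algebra.adjoin ℤ {α + α⁻¹}).toSubring.toAddSubgroup.map (AddMonoidHom.mulLeft 2)

variable {h : ℕ}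

theorem foldSymPowSpan_le_adjoin (hα : α ≠ 0) :
    foldSymPowSpan α h ≤ (Algebra.adjoin ℤ {α + α⁻¹}).toSubring.toAddSubgroup :=
  (AddSubgroup.closure_le _).2 fun _ ⟨_, _, _, hx⟩ =>
    hx ▸ add_mem (symPow_mem_adjoin hα _) (symPow_mem_adjoin hα _)

theorem foldSymPow_mem_foldSymPowIdeal (hα : α ≠ 0) (hm : α ^ (2 * (2 * h : ℤ)) = -1) {j : ℕ}
    (hj : j ≤ h) : foldSymPow α (2 * h) j ∈ foldSymPowIdeal α h := by
  rcases Nat.eq_zero_or_pos j with rfl | hj0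
  · refine AddSubgroup.mem_sup_right ⟨1, Subalgebra.one_mem _, ?_⟩
    rw [Nat.cast_zero, foldSymPow_zero hα hm, AddMonoidHom.coe_mulLeft, mul_one]
  rcases hj.eq_or_lt with rfl | hjh
  · exact AddSubgroup.mem_sup_right
      ⟨_, symPow_mem_adjoin hα j, (foldSymPow_two_mul_self (j : ℤ)).symm⟩
  · exact AddSubgroup.mem_sup_left (AddSubgroup.subset_closure ⟨j, hj0, by omega, rfl⟩)

theorem foldSymPowIdeal_le_adjoin (hα : α ≠ 0) :
    foldSymPowIdeal α h ≤ (Algebra.adjoin ℤ {α + α⁻¹}).toSubring.toAddSubgroup :=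
  sup_le (foldSymPowSpan_le_adjoin hα) <| AddSubgroup.map_le_iff_le_comap.2 fun _ ha =>
    Subalgebra.mul_mem _ (ofNat_mem _ 2) ha

theorem add_inv_mul_mem_foldSymPowIdeal (hα : α ≠ 0) (hm : α ^ (2 * (2 * h : ℤ)) = -1) {x : K}
    (hx : x ∈ foldSymPowIdeal α h) : (α + α⁻¹) * x ∈ foldSymPowIdeal α h := by
  suffices foldSymPowIdeal α h ≤ (foldSymPowIdeal α h).comap (AddMonoidHom.mulLeft (α + α⁻¹)) from
    this hx
  refine sup_le ((AddSubgroup.closure_le _).2 ?_) ?_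
  · rintro _ ⟨j, hj1, hjh, rfl⟩
    rw [SetLike.mem_coe, AddSubgroup.mem_comap, AddMonoidHom.coe_mulLeft,
      add_inv_mul_foldSymPow hα, ← Nat.cast_succ, ← Nat.cast_pred hj1]
    exact add_mem (foldSymPow_mem_foldSymPowIdeal hα hm (by omega))
      (foldSymPow_mem_foldSymPowIdeal hα hm (by omega))
  · rintro _ ⟨a, ha, rfl⟩
    have hβ : α + α⁻¹ ∈ Algebra.adjoin ℤ {α + α⁻¹} := Algebra.subset_adjoin rfl
    exact AddSubgroup.mem_sup_right ⟨_, Subalgebra.mul_mem _ hβ ha, mul_left_comm _ _ _⟩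

theorem exists_two_mul_of_mem_foldSymPowSpan (hα : α ≠ 0) (hm : α ^ (2 * (2 * h : ℤ)) = -1)
    {x y : K} (hx : x ∈ foldSymPowSpan α h) (hy : y ∈ foldSymPowSpan α h) :
    ∃ z ∈ Algebra.adjoin ℤ {α + α⁻¹}, x * y = 2 * z := by
  suffices x * y ∈ (Algebra.adjoin ℤ {α + α⁻¹}).toSubring.toAddSubgroup.map
      (AddMonoidHom.mulLeft 2) by
    obtain ⟨z, hz, hxy⟩ := this
    exact ⟨z, hz, hxy.symm⟩
  refine AddSubgroup.mul_mem_of_mem_closure ?_ hx hy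
  rintro _ ⟨j, -, -, rfl⟩ _ ⟨k, -, -, rfl⟩
  exact ⟨_, add_mem (symPow_mem_adjoin hα _) (symPow_mem_adjoin hα _),
    (foldSymPow_mul_foldSymPow hα hm _ _).symm⟩

end

theorem Complex.exp_two_pi_I_div_two_pow_succ_pow (k : ℕ) :
    Complex.exp (2 * Real.pi * Complex.I / 2 ^ (k + 1)) ^ 2 ^ k = -1 := by
  rw [← Complex.exp_nat_mul, ← Complex.exp_pi_mul_I]
  congr 1
  push_cast
  field_simp
  ring

theorem stmt_13 (n : ℕ) (hn : 3 ≤ n)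
    (α : ℂ) (hα : α = Complex.exp (2 * Real.pi * Complex.I / 2 ^ n))
    (s : ℤ → ℂ) (hs : ∀ j : ℤ, s j = α ^ j + α ^ (-j))
    (r : ℤ → ℂ) (hr : ∀ j : ℤ, r j = s j + s (2 ^ (n - 2) - j))
    (A : Subalgebra ℤ ℂ) (hA : A = Algebra.adjoin ℤ ({α + α⁻¹} : Set ℂ))
    (RZ : AddSubgroup ℂ)
    (hRZ : RZ = AddSubgroup.closure
      {x : ℂ | ∃ j : ℕ, 1 ≤ j ∧ j ≤ 2 ^ (n - 3) - 1 ∧ x = r j})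
    (Rt : Set ℂ)
    (hRt : Rt = {z : ℂ | ∃ x ∈ RZ, ∃ y ∈ A, z = x + 2 * y}) :
    (Rt ⊆ (A : Set ℂ)) ∧
    (∀ x ∈ Rt, ∀ y ∈ Rt, x + y ∈ Rt) ∧
    (∀ x ∈ Rt, -x ∈ Rt) ∧
    (∀ a ∈ A, ∀ x ∈ Rt, a * x ∈ Rt) ∧
    (∀ x ∈ RZ, ∀ y ∈ RZ, ∃ z ∈ A, x * y = 2 * z) := by
  obtain ⟨k, rfl⟩ : ∃ k, n = k + 3 := ⟨n - 3, by omega⟩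
  subst hA
  have hα0 : α ≠ 0 := hα ▸ Complex.exp_ne_zero _
  have hαm : α ^ (2 * (2 * ((2 ^ k : ℕ) : ℤ))) = -1 := by
    have hexp : 2 * (2 * ((2 ^ k : ℕ) : ℤ)) = ((2 ^ (k + 2) : ℕ) : ℤ) := by push_cast; ring
    rw [hexp, zpow_natCast, hα]
    exact Complex.exp_two_pi_I_div_two_pow_succ_pow (k + 2)
  obtain rfl : s = symPow α := funext hs
  obtain rfl : r = foldSymPow α (2 * ((2 ^ k : ℕ) : ℤ)) := funext fun j => by
    rw [hr, foldSymPow]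
    push_cast
    ring_nf
  obtain rfl : RZ = foldSymPowSpan α (2 ^ k) := hRZ
  obtain rfl : Rt = foldSymPowIdeal α (2 ^ k) := by
    ext z
    simp [hRt, foldSymPowIdeal, AddSubgroup.mem_sup, eq_comm]
  exact ⟨fun x hx => foldSymPowIdeal_le_adjoin hα0 hx, fun x hx y hy => add_mem hx hy,
    fun x hx => neg_mem hx,
    fun a ha x hx => AddSubgroup.mul_mem_of_mem_adjoin_singleton
      (fun y => add_inv_mul_mem_foldSymPowIdeal hα0 hαm) ha hx,
    fun x hx y hy => exists_two_mul_of_mem_foldSymPowSpan hα0 hαm hx hy⟩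
end

section
/- Let n ≥ 3, α = e^{2πi/2^n}, and d_j = 1 + α^j + α^{-j}. Then for every odd j and every natural number l, d_j^{2^l} ≡ d_{2^l j} (mod 2ℤ[α]); in particular d_j^{2^{n-2}} ≡ 1 (mod 2ℤ[α]). -/
/-!
Since `α ^ m * α ^ (-m) = 1`, one has `d_m ^ 2 = d_{2m} + 2 d_m`, so modulo `2` squaring sends
`d_m` to `d_{2m}`; iterating gives `d_j ^ (2 ^ l) ≡ d_{2 ^ l j}`. For the special case,
`β = α ^ (2 ^ (n - 2))` is a primitive fourth root of unity, so `β⁻¹ = -β` and `β ^ (-j) = -β ^ j`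
for odd `j`, whence `d_{2 ^ (n - 2) j} = 1`. The computation takes place in the ring `ℤ[α]`,
in which `α` is a unit because it is a root of unity.
-/

section

variable {R : Type*} [CommRing R]

/-- The paper's `d_m = 1 + α ^ m + α ^ (-m)`, for a unit `α` of any commutative ring. -/
def dSeq (u : Rˣ) (m : ℤ) : R := 1 + ↑(u ^ m) + ↑(u ^ (-m))

theorem dSeq_sq (u : Rˣ) (m : ℤ) : dSeq u m ^ 2 = dSeq u (2 * m) + 2 * dSeq u m := by
  have hinv : (↑(u ^ m) : R) * ↑(u ^ (-m)) = 1 := by simp [← Units.val_mul]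
  have hsq (k : ℤ) : (↑(u ^ (2 * k)) : R) = ↑(u ^ k) ^ 2 := by
    rw [mul_comm, zpow_mul, zpow_two, Units.val_mul, sq]
  rw [dSeq, dSeq, show -(2 * m) = 2 * -m by ring, hsq, hsq]
  linear_combination 2 * hinv

theorem dSeq_natCast_mul (u : Rˣ) (a : ℕ) (m : ℤ) : dSeq u (a * m) = dSeq (u ^ a) m := by
  simp only [dSeq, ← mul_neg, zpow_mul, zpow_natCast]

theorem dSeq_pow_two_pow_sub_mem_span_two (u : Rˣ) (j : ℤ) (l : ℕ) :
    dSeq u j ^ 2 ^ l - dSeq u (2 ^ l * j) ∈ Ideal.span {(2 : R)} := by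
  rw [← Ideal.Quotient.eq]
  induction l with
  | zero => simp
  | succ l ih =>
    have h2 : Ideal.Quotient.mk (Ideal.span {(2 : R)}) 2 = 0 :=
      Ideal.Quotient.eq_zero_iff_mem.2 (Ideal.mem_span_singleton_self 2)
    rw [pow_succ, pow_mul, map_pow, ih, ← map_pow, dSeq_sq, map_add, map_mul, h2, zero_mul,
      add_zero, ← mul_assoc, pow_succ']

theorem dSeq_eq_one_of_sq_eq_neg_one {v : Rˣ} (hv : v ^ 2 = -1) {j : ℤ} (hj : Odd j) :
    dSeq v j = 1 := by
  have hinv : v⁻¹ = -v := by rw [inv_eq_iff_mul_eq_one, mul_neg, ← sq, hv, neg_neg]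
  rw [dSeq, zpow_neg, ← inv_zpow, hinv, hj.neg_zpow, Units.val_neg]
  ring

theorem map_dSeq {R' : Type*} [CommRing R'] (f : R →+* R') (u : Rˣ) (m : ℤ) :
    f (dSeq u m) = dSeq (Units.map f u) m := by
  simp [dSeq, ← map_zpow]

end

theorem dSeq_eq_zpow {K : Type*} [Field K] (u : Kˣ) (m : ℤ) :
    dSeq u m = 1 + (u : K) ^ m + (u : K) ^ (-m) := by
  simp [dSeq, Units.val_zpow_eq_zpow_val]

theorem IsPrimitiveRoot.pow_two_pow_eq_neg_one {R : Type*} [CommRing R] [NoZeroDivisors R]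
    {ζ : R} {k : ℕ} (h : IsPrimitiveRoot ζ (2 ^ (k + 1))) : ζ ^ 2 ^ k = -1 := by
  have h2 := h.pow_of_dvd (by positivity) (pow_dvd_pow 2 k.le_succ)
  rw [pow_succ, Nat.mul_div_cancel_left _ (by positivity)] at h2
  exact h2.eq_neg_one_of_two_right

theorem Subalgebra.exists_mem_eq_two_mul {A : Type*} [CommRing A] {S : Subalgebra ℤ A} {a : S}
    (ha : a ∈ Ideal.span {(2 : S)}) : ∃ x ∈ S, (a : A) = 2 * x := by
  obtain ⟨x, rfl⟩ := Ideal.mem_span_singleton'.1 ha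
  exact ⟨x, x.2, by rw [mul_comm]; rfl⟩

theorem stmt_17 (n : ℕ) (hn : 3 ≤ n)
    (α : ℂ) (hα : α = Complex.exp (2 * Real.pi * Complex.I / 2 ^ n))
    (d : ℤ → ℂ) (hd : ∀ j : ℤ, d j = 1 + α ^ j + α ^ (-j)) :
    ∀ j : ℤ, Odd j →
      (∀ l : ℕ, ∃ x ∈ Algebra.adjoin ℤ ({α} : Set ℂ),
        d j ^ (2 ^ l) - d (2 ^ l * j) = 2 * x) ∧
      (∃ x ∈ Algebra.adjoin ℤ ({α} : Set ℂ),
        d j ^ (2 ^ (n - 2)) - 1 = 2 * x) := by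
  intro j hj
  set S := Algebra.adjoin ℤ ({α} : Set ℂ)
  let ζ : S := ⟨α, Algebra.self_mem_adjoin_singleton ℤ α⟩
  have hζ : IsPrimitiveRoot ζ (2 ^ n) := by
    refine IsPrimitiveRoot.of_map_of_injective (f := S.val) (hf := Subtype.val_injective) ?_
    simpa [ζ, hα] using Complex.isPrimitiveRoot_exp (2 ^ n) (by positivity)
  set u := (hζ.isUnit (by positivity)).unit
  have hdu (m : ℤ) : d m = algebraMap S ℂ (dSeq u m) := by
    rw [map_dSeq, dSeq_eq_zpow, hd]
    rfl
  have hu : (u ^ 2 ^ (n - 2)) ^ 2 = -1 := by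
    refine Units.ext ?_
    rw [show n = n - 2 + 1 + 1 by omega] at hζ
    simpa [← pow_mul, ← pow_succ, u] using hζ.pow_two_pow_eq_neg_one
  have hcongr (l : ℕ) : ∃ x ∈ S, d j ^ 2 ^ l - d (2 ^ l * j) = 2 * x := by
    simpa [hdu] using Subalgebra.exists_mem_eq_two_mul (dSeq_pow_two_pow_sub_mem_span_two u j l)
  have hd_one : dSeq u (2 ^ (n - 2) * j) = 1 := by
    exact_mod_cast (dSeq_natCast_mul u (2 ^ (n - 2)) j).trans (dSeq_eq_one_of_sq_eq_neg_one hu hj)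
  refine ⟨hcongr, ?_⟩
  simpa [hdu, hd_one] using hcongr (n - 2)
end

section
/- Let n ≥ 4, α = e^{2πi/2^n}, and d_1 = 1 + α + α^{-1}. Then for every k ∈ {0, 1, …, n-3}, d_1^{2^k} is NOT congruent to 1 modulo 2ℤ[α]; in particular d_1^{2^{n-3}} ≡ 1 + √2 (mod 2ℤ[α]) and √2/2 is not an algebraic integer. -/
/-!
Since `(x + y) ^ 2 ^ k ≡ x ^ 2 ^ k + y ^ 2 ^ k` modulo `2`, we get
`d₁ ^ 2 ^ k ≡ 1 + α ^ 2 ^ k + α⁻¹ ^ 2 ^ k`. If `α ^ m + α⁻¹ ^ m = 2 p(α)` with `p ∈ ℤ[X]`, then `α` is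
a root of `X ^ 2m + 1 - 2 p X ^ m`, so its minimal polynomial `X ^ 2 ^ (n - 1) + 1` divides it;
modulo `2` this says `X ^ 2 ^ (n - 1) + 1 ∣ X ^ 2m + 1`, impossible for `0 < 2m < 2 ^ (n - 1)`.
For `m = 2 ^ (n - 3)` we have `α ^ m = e^{iπ/4}`, so `α ^ m + α⁻¹ ^ m = 2 cos (π / 4) = √2`.
Finally `(√2 / 2) ^ 2 = 1 / 2` is a rational non-integer, hence not integral over `ℤ`.
-/

open Polynomial Real

theorem Subalgebra.exists_mem_add_pow_prime_pow_eq {R A : Type*} [CommRing R] [CommRing A]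
    [Algebra R A] (S : Subalgebra R A) {p : ℕ} (hp : p.Prime) {x y : A} (hx : x ∈ S)
    (hy : y ∈ S) (k : ℕ) : ∃ z ∈ S, (x + y) ^ p ^ k = x ^ p ^ k + y ^ p ^ k + p * z := by
  obtain ⟨r, hr⟩ := exists_add_pow_prime_pow_eq hp (⟨x, hx⟩ : S) ⟨y, hy⟩ k
  refine ⟨x * y * r, mul_mem (mul_mem hx hy) r.2, ?_⟩
  simpa [mul_assoc] using congrArg Subtype.val hr

theorem IsPrimitiveRoot.inv_mem_adjoin {R K : Type*} [CommRing R] [Field K] [Algebra R K]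
    {ζ : K} {N : ℕ} (hζ : IsPrimitiveRoot ζ N) (hN : 0 < N) : ζ⁻¹ ∈ Algebra.adjoin R {ζ} := by
  have hζinv : ζ ^ (N - 1) = ζ⁻¹ := by
    rw [pow_sub₀ ζ (hζ.ne_zero hN.ne') hN, hζ.pow_eq_one, pow_one, one_mul]
  exact hζinv ▸ pow_mem (Algebra.self_mem_adjoin_singleton R ζ) _

theorem Polynomial.cyclotomic_two_pow_succ (R : Type*) [CommRing R] (n : ℕ) :
    cyclotomic (2 ^ (n + 1)) R = X ^ 2 ^ n + 1 := by
  simp [cyclotomic_prime_pow_eq_geom_sum Nat.prime_two, Finset.sum_range_succ, add_comm]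

theorem Polynomial.X_pow_add_one_not_dvd_X_pow_add_one_sub_two_mul {N d : ℕ} (hd : 0 < d)
    (hdN : d < N) (q : ℤ[X]) : ¬ (X ^ N + 1 : ℤ[X]) ∣ X ^ d + 1 - 2 * q := by
  intro h
  have h₂ : (X ^ N + C 1 : (ZMod 2)[X]) ∣ X ^ d + C 1 := by
    simpa [show (2 : (ZMod 2)[X]) = 0 from CharTwo.two_eq_zero] using
      Polynomial.map_dvd (Int.castRingHom (ZMod 2)) h
  have := natDegree_le_of_dvd h₂ (X_pow_add_C_ne_zero hd 1)
  rw [natDegree_X_pow_add_C, natDegree_X_pow_add_C] at this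
  omega

theorem IsPrimitiveRoot.pow_add_inv_pow_ne_two_mul {K : Type*} [Field K] [CharZero K] {ζ : K}
    {n : ℕ} (hζ : IsPrimitiveRoot ζ (2 ^ (n + 1))) {m : ℕ} (hm : 0 < m) (hmn : 2 * m < 2 ^ n)
    {x : K} (hx : x ∈ Algebra.adjoin ℤ {ζ}) : ζ ^ m + ζ⁻¹ ^ m ≠ 2 * x := by
  intro h
  rw [Algebra.adjoin_singleton_eq_range_aeval] at hx
  obtain ⟨p, rfl⟩ := hx
  have hζ0 : ζ ≠ 0 := hζ.ne_zero (by positivity)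
  have hroot : aeval ζ (X ^ (2 * m) + 1 - 2 * (p * X ^ m) : ℤ[X]) = 0 := by
    have : ζ ^ m * ζ⁻¹ ^ m = 1 := by rw [← mul_pow, mul_inv_cancel₀ hζ0, one_pow]
    simp only [map_add, map_sub, map_mul, map_pow, aeval_X, map_one, map_ofNat]
    linear_combination ζ ^ m * h - this
  have hdvd := minpoly.isIntegrallyClosed_dvd (hζ.isIntegral (by positivity)) hroot
  rw [← cyclotomic_eq_minpoly hζ (by positivity), cyclotomic_two_pow_succ] at hdvd
  exact X_pow_add_one_not_dvd_X_pow_add_one_sub_two_mul (by positivity) hmn _ hdvd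

theorem Complex.exp_mul_I_pow_add_inv_pow (x : ℝ) (m : ℕ) :
    exp (x * I) ^ m + (exp (x * I))⁻¹ ^ m = 2 * Real.cos (m * x) := by
  rw [inv_pow, ← exp_nat_mul, ← exp_neg, ofReal_cos, two_cos]
  push_cast
  ring_nf

theorem Complex.exp_two_pi_I_div_two_pow_pow_add_inv_pow {n : ℕ} (hn : 3 ≤ n) :
    exp (2 * π * I / 2 ^ n) ^ 2 ^ (n - 3) + (exp (2 * π * I / 2 ^ n))⁻¹ ^ 2 ^ (n - 3)
      = Real.sqrt 2 := by
  have harg : 2 * π * I / 2 ^ n = ((2 * π / 2 ^ n : ℝ) : ℂ) * I := by push_cast; ring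
  have hangle : ((2 ^ (n - 3) : ℕ) : ℝ) * (2 * π / 2 ^ n) = π / 4 := by
    rw [show n = n - 3 + 3 by omega, pow_add]
    push_cast
    field_simp
    norm_num
  rw [harg, exp_mul_I_pow_add_inv_pow, hangle, Real.cos_pi_div_four]
  push_cast
  ring

theorem not_isIntegral_int_inv_two {K : Type*} [Field K] [CharZero K] :
    ¬ IsIntegral ℤ (2⁻¹ : K) := by
  intro h
  rw [show (2⁻¹ : K) = algebraMap ℚ K 2⁻¹ by simp,
    isIntegral_algebraMap_iff (algebraMap ℚ K).injective] at h
  obtain ⟨y, hy⟩ := IsIntegrallyClosed.isIntegral_iff.mp h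
  have : (y : ℚ) * 2 = 1 := by rw [show (y : ℚ) = 2⁻¹ from hy]; norm_num
  have : y * 2 = 1 := by exact_mod_cast this
  omega

theorem stmt_18 (n : ℕ) (hn : 4 ≤ n)
    (α : ℂ) (hα : α = Complex.exp (2 * Real.pi * Complex.I / 2 ^ n))
    (d₁ : ℂ) (hd : d₁ = 1 + α + α⁻¹) :
    (∀ k : ℕ, k ≤ n - 3 →
      ¬ ∃ x ∈ Algebra.adjoin ℤ ({α} : Set ℂ), d₁ ^ (2 ^ k) - 1 = 2 * x) ∧
    (∃ x ∈ Algebra.adjoin ℤ ({α} : Set ℂ),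
      d₁ ^ (2 ^ (n - 3)) - (1 + (Real.sqrt 2 : ℂ)) = 2 * x) ∧
    ¬ IsIntegral ℤ ((Real.sqrt 2 : ℂ) / 2) := by
  have hprim : IsPrimitiveRoot α (2 ^ (n - 1 + 1)) := by
    rw [Nat.sub_add_cancel (by omega), hα]
    exact_mod_cast Complex.isPrimitiveRoot_exp (2 ^ n) (by positivity)
  set S := Algebra.adjoin ℤ ({α} : Set ℂ)
  have hcong : ∀ k, ∃ z ∈ S, d₁ ^ 2 ^ k = 1 + α ^ 2 ^ k + α⁻¹ ^ 2 ^ k + 2 * z := by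
    intro k
    have hαS : α ∈ S := Algebra.self_mem_adjoin_singleton ℤ α
    obtain ⟨z₁, hz₁, h₁⟩ :=
      S.exists_mem_add_pow_prime_pow_eq Nat.prime_two (one_mem S) hαS k
    obtain ⟨z₂, hz₂, h₂⟩ := S.exists_mem_add_pow_prime_pow_eq Nat.prime_two
      (add_mem (one_mem S) hαS) (hprim.inv_mem_adjoin (by positivity)) k
    exact ⟨z₁ + z₂, add_mem hz₁ hz₂, by rw [hd, h₂, h₁]; push_cast; ring⟩
  refine ⟨?_, ?_, ?_⟩
  · rintro k hk ⟨x, hx, hdx⟩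
    obtain ⟨z, hz, hdz⟩ := hcong k
    have hlt : 2 * 2 ^ k < 2 ^ (n - 1) := by
      rw [← pow_succ']
      exact Nat.pow_lt_pow_right (by norm_num) (by omega)
    exact hprim.pow_add_inv_pow_ne_two_mul (by positivity) hlt (sub_mem hx hz)
      (by linear_combination hdx - hdz)
  · obtain ⟨z, hz, hdz⟩ := hcong (n - 3)
    refine ⟨z, hz, ?_⟩
    rw [hdz, ← Complex.exp_two_pi_I_div_two_pow_pow_add_inv_pow (by omega : 3 ≤ n), ← hα]
    ring
  · intro h
    have hsq : ((Real.sqrt 2 : ℂ) / 2) ^ 2 = 2⁻¹ := by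
      rw [div_pow, ← Complex.ofReal_pow, Real.sq_sqrt zero_le_two]
      norm_num
    exact not_isIntegral_int_inv_two (hsq ▸ h.pow 2)
end
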